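/- arXiv:0804.2795 — 2 statements merged into one kernel-verified Lean document; each statement's English description precedes it below -/
import Mathlib

section
/- Let θ > 0 and v > 0, set w = θ²/(2v), and let ĥ(ξ) = (θ³/v)·φ(vξ/θ²) for ξ ∈ [0,w], where φ is the traveling-wave profile. Then for all ξ ∈ [0,w]: (4√2/3)·(v^{3/2}/θ²)·ξ·(w − ξ)^{3/2} ≤ ĥ(ξ) ≤ (4√6/3)·(v^{3/2}/θ²)·ξ·(w − ξ)^{3/2}. -/
/-!
Integrating `φ φ''' = 1` once gives `φ φ'' - φ'² / 2 = x - 1/2`; the constant is read off at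
`0⁺`, where `φ' → 1` and `φ φ'' → 0`. For `u = √φ` this first integral says exactly
`u'' = -(1/2 - x) / (2 u³)`, a second-order equation whose right-hand side increases with `u`,
so a maximum principle compares `u` with sub- and supersolutions vanishing at `0` and `1/2`.
The barriers `g = √(c x (1/2 - x)^{3/2})` satisfy `g'' = c² Q(x) · (-(1/2 - x) / (2 g³))` with
a quadratic `Q` ranging over `[3/32, 3/20]` on `[0, 1/2]`: they are subsolutions for
`c² ≤ 20/3` and supersolutions for `c² ≥ 32/3`. Squaring gives `c x (1/2 - x)^{3/2}` bounds on
`φ`, with `c = 4√2/3` and `c = 4√6/3`, and the rescaling `ĥ = (θ³/v) φ(v ξ / θ²)` carries them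
over to `ĥ`.
-/

/-- The traveling-wave profile problem (0.2) with d = 1/2. -/
def IsTWProfile (φ : ℝ → ℝ) : Prop :=
  ContDiffOn ℝ 1 φ (Set.Icc 0 (1/2)) ∧
  ContDiffOn ℝ 3 φ (Set.Ioo 0 (1/2)) ∧
  (∀ η ∈ Set.Ioo (0:ℝ) (1/2), 0 < φ η) ∧
  φ 0 = 0 ∧ φ (1/2) = 0 ∧
  derivWithin φ (Set.Icc 0 (1/2)) 0 = 1 ∧
  (∀ η ∈ Set.Ioo (0:ℝ) (1/2), φ η * deriv (deriv (deriv φ)) η = 1)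

open Set Filter Topology

theorem nonpos_of_deriv2_pos_where_pos {a b : ℝ} {f f' f'' : ℝ → ℝ} (hab : a < b)
    (hf : ContinuousOn f (Icc a b))
    (hf' : ∀ x ∈ Ioo a b, HasDerivAt f (f' x) x)
    (hf'' : ∀ x ∈ Ioo a b, HasDerivAt f' (f'' x) x)
    (hpos : ∀ x ∈ Ioo a b, 0 < f x → 0 < f'' x)
    (ha : f a ≤ 0) (hb : f b ≤ 0) :
    ∀ x ∈ Icc a b, f x ≤ 0 := by
  by_contra! ⟨x₀, hx₀, hfx₀⟩
  obtain ⟨z, hz, hmax⟩ := isCompact_Icc.exists_isMaxOn (nonempty_Icc.2 hab.le) hf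
  have hfz : 0 < f z := hfx₀.trans_le (hmax hx₀)
  have hz' : z ∈ Ioo a b :=
    ⟨hz.1.lt_of_ne (by rintro rfl; linarith), hz.2.lt_of_ne (by rintro rfl; linarith)⟩
  have hf'z : f' z = 0 :=
    (hmax.isLocalMax (Icc_mem_nhds hz'.1 hz'.2)).hasDerivAt_eq_zero (hf' z hz')
  -- To the right of `z` we still have `f > 0`, hence `f'' > 0`: there `f'` increases from
  -- `f' z = 0`, so `f` increases beyond its maximum.
  have hnhds : {y | y ∈ Ioo a b ∧ 0 < f y} ∈ 𝓝 z := inter_mem (isOpen_Ioo.mem_nhds hz')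
    (continuousAt_const.eventually_lt (hf' z hz').continuousAt hfz)
  obtain ⟨u, hzu, hsub⟩ := exists_Ico_subset_of_mem_nhds hnhds ⟨b, hz'.2⟩
  have hf'_near : ∀ y ∈ Ico z u, HasDerivAt f (f' y) y := fun y hy => hf' y (hsub hy).1
  have hf''_near : ∀ y ∈ Ico z u, HasDerivAt f' (f'' y) y := fun y hy => hf'' y (hsub hy).1
  have hf'mono : StrictMonoOn f' (Ico z u) :=
    strictMonoOn_of_hasDerivWithinAt_pos (convex_Ico z u) (HasDerivAt.continuousOn hf''_near)
      (fun y hy => (hf''_near y (interior_subset hy)).hasDerivWithinAt)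
      fun y hy => hpos y (hsub (interior_subset hy)).1 (hsub (interior_subset hy)).2
  have hfmono : StrictMonoOn f (Ico z u) := by
    refine strictMonoOn_of_hasDerivWithinAt_pos (convex_Ico z u)
      (HasDerivAt.continuousOn hf'_near)
      (fun y hy => (hf'_near y (interior_subset hy)).hasDerivWithinAt) fun y hy => ?_
    rw [interior_Ico] at hy
    exact hf'z ▸ hf'mono (left_mem_Ico.2 hzu) (Ioo_subset_Ico_self hy) hy.1
  have hm : (z + u) / 2 ∈ Ico z u := ⟨by linarith, by linarith⟩
  exact (hfmono (left_mem_Ico.2 hzu) hm (by linarith)).not_ge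
    (hmax (Ioo_subset_Icc_self (hsub hm).1))

theorem le_of_subsolution_of_supersolution {a b : ℝ} {F : ℝ → ℝ → ℝ}
    {v v' v'' w w' w'' : ℝ → ℝ} (hab : a < b)
    (hF : ∀ x ∈ Ioo a b, StrictMonoOn (F x) (Ioi 0))
    (hv : ContinuousOn v (Icc a b)) (hw : ContinuousOn w (Icc a b))
    (hv' : ∀ x ∈ Ioo a b, HasDerivAt v (v' x) x)
    (hv'' : ∀ x ∈ Ioo a b, HasDerivAt v' (v'' x) x)
    (hw' : ∀ x ∈ Ioo a b, HasDerivAt w (w' x) x)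
    (hw'' : ∀ x ∈ Ioo a b, HasDerivAt w' (w'' x) x)
    (hw_pos : ∀ x ∈ Ioo a b, 0 < w x)
    (hv_sub : ∀ x ∈ Ioo a b, F x (v x) ≤ v'' x)
    (hw_super : ∀ x ∈ Ioo a b, w'' x ≤ F x (w x))
    (ha : v a ≤ w a) (hb : v b ≤ w b) :
    ∀ x ∈ Icc a b, v x ≤ w x := by
  have key := nonpos_of_deriv2_pos_where_pos hab (hv.sub hw)
    (fun x hx => (hv' x hx).sub (hw' x hx)) (fun x hx => (hv'' x hx).sub (hw'' x hx))
    (fun x hx hvw => ?_) (sub_nonpos.2 ha) (sub_nonpos.2 hb)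
  · exact fun x hx => sub_nonpos.1 (key x hx)
  · have hwv : w x < v x := sub_pos.1 hvw
    have hFx := hF x hx (mem_Ioi.2 (hw_pos x hx)) (mem_Ioi.2 ((hw_pos x hx).trans hwv)) hwv
    linarith [hv_sub x hx, hw_super x hx]

theorem tendsto_const_mul_nhdsGT_zero {c : ℝ} (hc : 0 < c) :
    Tendsto (fun x : ℝ => c * x) (𝓝[>] 0) (𝓝[>] 0) :=
  tendsto_nhdsWithin_of_tendsto_nhds_of_eventually_within _
    (by simpa using ((continuous_const_mul c).tendsto 0).mono_left nhdsWithin_le_nhds)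
    (eventually_nhdsWithin_of_forall fun _ hx => mul_pos hc hx)

noncomputable def sqrtProfileRhs (x y : ℝ) : ℝ := -(1/2 - x) / (2 * y ^ 3)

theorem strictMonoOn_sqrtProfileRhs {x : ℝ} (hx : x < 1/2) :
    StrictMonoOn (sqrtProfileRhs x) (Ioi 0) := fun y hy z _ hyz => by
  have : y ^ 3 < z ^ 3 := pow_lt_pow_left₀ hyz (le_of_lt hy) (by norm_num)
  unfold sqrtProfileRhs
  rw [neg_div, neg_div, neg_lt_neg_iff]
  exact div_lt_div_of_pos_left (by linarith) (by have := hy.out; positivity) (by linarith)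

theorem sqrtProfileRhs_neg {x y : ℝ} (hx : x < 1/2) (hy : 0 < y) : sqrtProfileRhs x y < 0 :=
  div_neg_of_neg_of_pos (by linarith) (by positivity)

noncomputable def profileShape (x : ℝ) : ℝ := x * (1/2 - x) ^ (3/2 : ℝ)

noncomputable def barrier (c x : ℝ) : ℝ := √(c * profileShape x)

noncomputable def barrierLogDeriv (x : ℝ) : ℝ := 1 / (2 * x) - 3 / (4 * (1/2 - x))

noncomputable def barrierCoeff (x : ℝ) : ℝ :=
  (1/2 - x) ^ 2 / 2 + 3/2 * x * (1/2 - x) + 3/8 * x ^ 2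

theorem continuous_barrier (c : ℝ) : Continuous (barrier c) :=
  Real.continuous_sqrt.comp (continuous_const.mul (continuous_id.mul
    ((Real.continuous_rpow_const (by norm_num)).comp (continuous_const.sub continuous_id))))

theorem barrier_zero (c : ℝ) : barrier c 0 = 0 := by simp [barrier, profileShape]

theorem barrier_half (c : ℝ) : barrier c (1/2) = 0 := by simp [barrier, profileShape]

theorem profileShape_pos {x : ℝ} (hx : x ∈ Ioo 0 (1/2)) : 0 < profileShape x :=
  mul_pos hx.1 (Real.rpow_pos_of_pos (by linarith [hx.2]) _)

theorem barrier_pos {c x : ℝ} (hc : 0 < c) (hx : x ∈ Ioo 0 (1/2)) : 0 < barrier c x :=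
  Real.sqrt_pos.2 (mul_pos hc (profileShape_pos hx))

theorem barrier_nonneg (c x : ℝ) : 0 ≤ barrier c x := Real.sqrt_nonneg _

theorem sq_barrier {c x : ℝ} (hc : 0 ≤ c) (hx : x ∈ Icc 0 (1/2)) :
    barrier c x ^ 2 = c * profileShape x :=
  Real.sq_sqrt (mul_nonneg hc (mul_nonneg hx.1 (Real.rpow_nonneg (by linarith [hx.2]) _)))

theorem hasDerivAt_profileShape {x : ℝ} (hx : x ∈ Ioo 0 (1/2)) :
    HasDerivAt profileShape (2 * profileShape x * barrierLogDeriv x) x := by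
  have hx0 : x ≠ 0 := hx.1.ne'
  have hs : 1/2 - x ≠ 0 := by linarith [hx.2]
  have h := (hasDerivAt_id x).mul
    (((hasDerivAt_id x).const_sub (1/2)).rpow_const (p := 3/2) (Or.inl hs))
  refine h.congr_deriv ?_
  simp only [id]
  rw [Real.rpow_sub_one hs]
  simp only [profileShape, barrierLogDeriv]
  generalize 1/2 - x = s at hs ⊢
  field_simp
  ring

theorem hasDerivAt_barrier {c x : ℝ} (hc : 0 < c) (hx : x ∈ Ioo 0 (1/2)) :
    HasDerivAt (barrier c) (barrier c x * barrierLogDeriv x) x := by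
  have hg := barrier_pos hc hx
  have h := ((hasDerivAt_profileShape hx).const_mul c).sqrt (mul_pos hc (profileShape_pos hx)).ne'
  refine h.congr_deriv ?_
  have hsq := sq_barrier hc.le (Ioo_subset_Icc_self hx)
  change c * _ / (2 * barrier c x) = _
  field_simp
  linear_combination (-barrierLogDeriv x) * hsq

theorem hasDerivAt_barrier_mul_logDeriv {c x : ℝ} (hc : 0 < c) (hx : x ∈ Ioo 0 (1/2)) :
    HasDerivAt (fun y => barrier c y * barrierLogDeriv y)
      (c ^ 2 * barrierCoeff x * sqrtProfileRhs x (barrier c x)) x := by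
  have hx0 : x ≠ 0 := hx.1.ne'
  have hs : 1/2 - x ≠ 0 := by linarith [hx.2]
  have hL : HasDerivAt barrierLogDeriv (-1 / (2 * x ^ 2) - 3 / (4 * (1/2 - x) ^ 2)) x := by
    have h := ((((hasDerivAt_id x).const_mul 2).inv (by simpa using hx0)).const_mul 1).sub
      (((((hasDerivAt_id x).const_sub (1/2)).const_mul 4).inv (by simpa using hs)).const_mul 3)
    refine h.congr_deriv ?_
    simp only [id]
    generalize 1/2 - x = s at hs ⊢
    field_simp
  refine ((hasDerivAt_barrier hc hx).mul hL).congr_deriv ?_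
  have hg := barrier_pos hc hx
  have hsq := sq_barrier hc.le (Ioo_subset_Icc_self hx)
  have hpow : ((1/2 - x) ^ (3/2 : ℝ)) ^ 2 = (1/2 - x) ^ 3 := by
    rw [← Real.rpow_natCast, ← Real.rpow_mul (by linarith [hx.2])]
    norm_num
  have hg4 : barrier c x ^ 4 = c ^ 2 * x ^ 2 * (1/2 - x) ^ 3 := by
    rw [show barrier c x ^ 4 = (barrier c x ^ 2) ^ 2 by ring, hsq, profileShape, mul_pow,
      mul_pow, hpow]
    ring
  simp only [barrierLogDeriv, barrierCoeff, sqrtProfileRhs]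
  generalize 1/2 - x = s at hs hg4 ⊢
  field_simp
  linear_combination (-(128 * s ^ 2 + 384 * s * x + 96 * x ^ 2)) * hg4

theorem barrierCoeff_le (x : ℝ) : barrierCoeff x ≤ 3/20 := by
  unfold barrierCoeff
  nlinarith [sq_nonneg (x - 1/5)]

theorem barrierCoeff_nonneg {x : ℝ} (hx : x ∈ Icc 0 (1/2)) : 0 ≤ barrierCoeff x := by
  have := hx.1; have := hx.2
  unfold barrierCoeff
  positivity

theorem le_barrierCoeff {x : ℝ} (hx : x ∈ Icc 0 (1/2)) : 3/32 ≤ barrierCoeff x := by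
  unfold barrierCoeff
  nlinarith [mul_nonneg hx.1 (sub_nonneg.2 hx.2)]

namespace IsTWProfile

variable {φ : ℝ → ℝ} {x : ℝ}

theorem pos (hφ : IsTWProfile φ) (hx : x ∈ Ioo 0 (1/2)) : 0 < φ x := hφ.2.2.1 x hx

theorem nonneg (hφ : IsTWProfile φ) (hx : x ∈ Icc 0 (1/2)) : 0 ≤ φ x := by
  obtain ⟨-, -, hpos, h0, hhalf, -⟩ := hφ
  rcases hx.1.eq_or_lt with rfl | hx0
  · exact h0.ge
  rcases hx.2.eq_or_lt with rfl | hx1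
  · exact hhalf.ge
  exact (hpos x ⟨hx0, hx1⟩).le

theorem contDiffOn_deriv (hφ : IsTWProfile φ) : ContDiffOn ℝ 2 (deriv φ) (Ioo 0 (1/2)) :=
  hφ.2.1.deriv_of_isOpen isOpen_Ioo (by norm_num)

theorem hasDerivAt (hφ : IsTWProfile φ) (hx : x ∈ Ioo 0 (1/2)) :
    HasDerivAt φ (deriv φ x) x :=
  ((hφ.2.1.differentiableOn (by norm_num)).differentiableAt (isOpen_Ioo.mem_nhds hx)).hasDerivAt

theorem hasDerivAt_deriv (hφ : IsTWProfile φ) (hx : x ∈ Ioo 0 (1/2)) :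
    HasDerivAt (deriv φ) (deriv (deriv φ) x) x :=
  ((hφ.contDiffOn_deriv.differentiableOn (by norm_num)).differentiableAt
    (isOpen_Ioo.mem_nhds hx)).hasDerivAt

theorem hasDerivAt_deriv_deriv (hφ : IsTWProfile φ) (hx : x ∈ Ioo 0 (1/2)) :
    HasDerivAt (deriv (deriv φ)) (deriv (deriv (deriv φ)) x) x :=
  (((hφ.contDiffOn_deriv.deriv_of_isOpen (m := 1) isOpen_Ioo (by norm_num)).differentiableOn
    (by norm_num)).differentiableAt (isOpen_Ioo.mem_nhds hx)).hasDerivAt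

theorem hasDerivWithinAt_zero (hφ : IsTWProfile φ) : HasDerivWithinAt φ 1 (Icc 0 (1/2)) 0 := by
  have h := ((hφ.1.differentiableOn (by norm_num)) 0 (by norm_num)).hasDerivWithinAt
  rwa [hφ.2.2.2.2.2.1] at h

theorem tendsto_deriv (hφ : IsTWProfile φ) : Tendsto (deriv φ) (𝓝[>] 0) (𝓝 1) := by
  have hcont := hφ.1.continuousOn_derivWithin (uniqueDiffOn_Icc (by norm_num)) le_rfl
    0 (by norm_num)
  rw [ContinuousWithinAt, hφ.2.2.2.2.2.1] at hcont
  rw [← nhdsWithin_Ioo_eq_nhdsGT (by norm_num : (0:ℝ) < 1/2)]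
  refine (hcont.mono_left (nhdsWithin_mono _ Ioo_subset_Icc_self)).congr' ?_
  filter_upwards [self_mem_nhdsWithin] with y hy
  exact derivWithin_of_mem_nhds (Icc_mem_nhds hy.1 hy.2)

theorem tendsto_slope_zero (hφ : IsTWProfile φ) :
    Tendsto (fun x => φ x / x) (𝓝[>] 0) (𝓝 1) := by
  have h := (hasDerivWithinAt_iff_tendsto_slope' (s := Ioo 0 (1/2)) (by simp)).1
    (hφ.hasDerivWithinAt_zero.mono Ioo_subset_Icc_self)
  rw [nhdsWithin_Ioo_eq_nhdsGT (by norm_num)] at h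
  refine h.congr fun y => ?_
  simp [slope_def_field, hφ.2.2.2.1]

theorem convexOn_deriv (hφ : IsTWProfile φ) : ConvexOn ℝ (Ioo 0 (1/2)) (deriv φ) := by
  refine convexOn_of_hasDerivWithinAt2_nonneg (f' := deriv (deriv φ))
    (f'' := deriv (deriv (deriv φ))) (convex_Ioo _ _)
    (fun y hy => (hφ.hasDerivAt_deriv hy).continuousAt.continuousWithinAt) ?_ ?_ ?_ <;>
    simp only [interior_Ioo] <;> intro y hy
  · exact (hφ.hasDerivAt_deriv hy).hasDerivWithinAt
  · exact (hφ.hasDerivAt_deriv_deriv hy).hasDerivWithinAt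
  · have h := hφ.2.2.2.2.2.2 y hy
    exact (pos_of_mul_pos_right (h ▸ one_pos) (hφ.pos hy).le).le

-- By convexity of `φ'`, `2 (φ'(x) - φ'(x/2)) ≤ x φ''(x) ≤ φ'(2x) - φ'(x)`, and both bounds
-- tend to `0` since `φ'(0⁺) = 1`.
theorem tendsto_id_mul_deriv_deriv (hφ : IsTWProfile φ) :
    Tendsto (fun x => x * deriv (deriv φ) x) (𝓝[>] 0) (𝓝 0) := by
  have hd := hφ.tendsto_deriv
  have hlow : Tendsto (fun x => 2 * (deriv φ x - deriv φ (1/2 * x))) (𝓝[>] 0) (𝓝 0) := by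
    simpa using ((hd.sub (hd.comp (tendsto_const_mul_nhdsGT_zero (by norm_num)))).const_mul 2)
  have hup : Tendsto (fun x => deriv φ (2 * x) - deriv φ x) (𝓝[>] 0) (𝓝 0) := by
    simpa using (hd.comp (tendsto_const_mul_nhdsGT_zero (by norm_num))).sub hd
  have hnear : Ioo (0:ℝ) (1/4) ∈ 𝓝[>] 0 := Ioo_mem_nhdsGT (by norm_num)
  refine tendsto_of_tendsto_of_tendsto_of_le_of_le' hlow hup ?_ ?_ <;>
    filter_upwards [hnear] with x hx <;>
    have hxS : x ∈ Ioo (0:ℝ) (1/2) := ⟨hx.1, by linarith [hx.2]⟩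
  · have h := hφ.convexOn_deriv.slope_le_of_hasDerivAt (x := 1/2 * x)
      ⟨by linarith [hx.1], by linarith [hx.2]⟩ hxS (by linarith [hx.1])
      (hφ.hasDerivAt_deriv hxS)
    rw [slope_def_field, div_le_iff₀ (by linarith [hx.1])] at h
    linarith
  · have h := hφ.convexOn_deriv.le_slope_of_hasDerivAt (y := 2 * x) hxS
      ⟨by linarith [hx.1], by linarith [hx.2]⟩ (by linarith [hx.1]) (hφ.hasDerivAt_deriv hxS)
    rw [slope_def_field, le_div_iff₀ (by linarith [hx.1])] at h
    linarith

theorem tendsto_mul_deriv_deriv (hφ : IsTWProfile φ) :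
    Tendsto (fun x => φ x * deriv (deriv φ) x) (𝓝[>] 0) (𝓝 0) := by
  have h := hφ.tendsto_slope_zero.mul hφ.tendsto_id_mul_deriv_deriv
  rw [one_mul] at h
  refine h.congr' ?_
  filter_upwards [self_mem_nhdsWithin] with x (hx : 0 < x)
  field_simp

theorem first_integral (hφ : IsTWProfile φ) (hx : x ∈ Ioo 0 (1/2)) :
    φ x * deriv (deriv φ) x - deriv φ x ^ 2 / 2 = x - 1/2 := by
  set P : ℝ → ℝ := fun y => φ y * deriv (deriv φ) y - deriv φ y ^ 2 / 2 - y
  have hP : ∀ y ∈ Ioo (0:ℝ) (1/2), HasDerivAt P 0 y := fun y hy => by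
    have h := (((hφ.hasDerivAt hy).mul (hφ.hasDerivAt_deriv_deriv hy)).sub
      (((hφ.hasDerivAt_deriv hy).pow 2).div_const 2)).sub (hasDerivAt_id y)
    exact h.congr_deriv (by linear_combination hφ.2.2.2.2.2.2 y hy)
  obtain ⟨C, hC⟩ := isOpen_Ioo.exists_is_const_of_deriv_eq_zero isPreconnected_Ioo
    (fun y hy => (hP y hy).differentiableAt.differentiableWithinAt) fun y hy => (hP y hy).deriv
  have hlim : Tendsto P (𝓝[>] 0) (𝓝 (0 - 1 ^ 2 / 2 - 0)) :=
    (hφ.tendsto_mul_deriv_deriv.sub ((hφ.tendsto_deriv.pow 2).div_const 2)).sub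
      (tendsto_nhdsWithin_of_tendsto_nhds tendsto_id)
  have hconst : Tendsto P (𝓝[>] 0) (𝓝 C) := tendsto_const_nhds.congr' <| by
    filter_upwards [Ioo_mem_nhdsGT (by norm_num : (0:ℝ) < 1/2)] with y hy using (hC y hy).symm
  have := hC x hx
  have := tendsto_nhds_unique hconst hlim
  simp only [P] at *
  linarith

theorem hasDerivAt_sqrt (hφ : IsTWProfile φ) (hx : x ∈ Ioo 0 (1/2)) :
    HasDerivAt (fun y => √(φ y)) (deriv φ x / (2 * √(φ x))) x :=
  (hφ.hasDerivAt hx).sqrt (hφ.pos hx).ne'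

theorem hasDerivAt_deriv_div_sqrt (hφ : IsTWProfile φ) (hx : x ∈ Ioo 0 (1/2)) :
    HasDerivAt (fun y => deriv φ y / (2 * √(φ y))) (sqrtProfileRhs x √(φ x)) x := by
  have hφx := hφ.pos hx
  have hsqrt := Real.sqrt_pos.2 hφx
  refine ((hφ.hasDerivAt_deriv hx).div ((hφ.hasDerivAt_sqrt hx).const_mul 2)
    (by positivity)).congr_deriv ?_
  have hsq : √(φ x) ^ 2 = φ x := Real.sq_sqrt hφx.le
  simp only [sqrtProfileRhs]
  field_simp
  linear_combination 2 * hφ.first_integral hx + (2 * deriv (deriv φ) x) * hsq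

theorem mul_profileShape_le (hφ : IsTWProfile φ) {c : ℝ} (hc : 0 < c) (hc2 : c ^ 2 ≤ 20/3)
    (hx : x ∈ Icc 0 (1/2)) : c * profileShape x ≤ φ x := by
  have hcmp := le_of_subsolution_of_supersolution (by norm_num : (0:ℝ) < 1/2)
    (fun y hy => strictMonoOn_sqrtProfileRhs hy.2) (continuous_barrier c).continuousOn
    hφ.1.continuousOn.sqrt
    (fun y hy => hasDerivAt_barrier hc hy) (fun y hy => hasDerivAt_barrier_mul_logDeriv hc hy)
    (fun y hy => hφ.hasDerivAt_sqrt hy) (fun y hy => hφ.hasDerivAt_deriv_div_sqrt hy)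
    (fun y hy => Real.sqrt_pos.2 (hφ.pos hy)) (fun y hy => ?_) (fun y hy => le_rfl)
    ((barrier_zero c).trans_le (Real.sqrt_nonneg _))
    ((barrier_half c).trans_le (Real.sqrt_nonneg _)) x hx
  · rw [← sq_barrier hc.le hx, ← Real.sq_sqrt (hφ.nonneg hx)]
    exact pow_le_pow_left₀ (barrier_nonneg c x) hcmp 2
  · have hF := sqrtProfileRhs_neg hy.2 (barrier_pos hc hy)
    have hk : c ^ 2 * barrierCoeff y ≤ 1 := by
      nlinarith [barrierCoeff_le y, barrierCoeff_nonneg (Ioo_subset_Icc_self hy)]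
    simpa using mul_le_mul_of_nonpos_right hk hF.le

theorem le_mul_profileShape (hφ : IsTWProfile φ) {c : ℝ} (hc : 0 < c) (hc2 : 32/3 ≤ c ^ 2)
    (hx : x ∈ Icc 0 (1/2)) : φ x ≤ c * profileShape x := by
  have hcmp := le_of_subsolution_of_supersolution (by norm_num : (0:ℝ) < 1/2)
    (fun y hy => strictMonoOn_sqrtProfileRhs hy.2)
    hφ.1.continuousOn.sqrt (continuous_barrier c).continuousOn
    (fun y hy => hφ.hasDerivAt_sqrt hy) (fun y hy => hφ.hasDerivAt_deriv_div_sqrt hy)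
    (fun y hy => hasDerivAt_barrier hc hy) (fun y hy => hasDerivAt_barrier_mul_logDeriv hc hy)
    (fun y hy => barrier_pos hc hy) (fun y hy => le_rfl) (fun y hy => ?_)
    (by rw [hφ.2.2.2.1, Real.sqrt_zero, barrier_zero])
    (by rw [hφ.2.2.2.2.1, Real.sqrt_zero, barrier_half]) x hx
  · rw [← sq_barrier hc.le hx, ← Real.sq_sqrt (hφ.nonneg hx)]
    exact pow_le_pow_left₀ (Real.sqrt_nonneg _) hcmp 2
  · have hF := sqrtProfileRhs_neg hy.2 (barrier_pos hc hy)
    have hk : 1 ≤ c ^ 2 * barrierCoeff y := by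
      nlinarith [le_barrierCoeff (Ioo_subset_Icc_self hy)]
    simpa using mul_le_mul_of_nonpos_right hk hF.le

end IsTWProfile

theorem profileShape_rescale {θ v ξ : ℝ} (hθ : 0 < θ) (hv : 0 < v)
    (hξ : ξ ≤ θ ^ 2 / (2 * v)) :
    θ ^ 3 / v * profileShape (v * ξ / θ ^ 2) =
      v ^ (3/2 : ℝ) / θ ^ 2 * ξ * (θ ^ 2 / (2 * v) - ξ) ^ (3/2 : ℝ) := by
  have hs : 1/2 - v * ξ / θ ^ 2 = v / θ ^ 2 * (θ ^ 2 / (2 * v) - ξ) := by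
    field_simp
  have hθ3 : (θ ^ 2) ^ (3/2 : ℝ) = θ ^ 3 := by
    rw [← Real.rpow_natCast, ← Real.rpow_mul hθ.le]
    norm_num
  rw [profileShape, hs, Real.mul_rpow (by positivity) (by linarith [sub_nonneg.2 hξ]),
    Real.div_rpow hv.le (by positivity), hθ3]
  field_simp

theorem mul_div_sq_mem_Icc {θ v ξ : ℝ} (hθ : 0 < θ) (hv : 0 < v)
    (hξ : ξ ∈ Icc 0 (θ ^ 2 / (2 * v))) : v * ξ / θ ^ 2 ∈ Icc (0:ℝ) (1/2) := by
  refine ⟨by have := hξ.1; positivity, ?_⟩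
  have := (le_div_iff₀ (by positivity)).1 hξ.2
  rw [div_le_iff₀ (by positivity)]
  linarith

/-- Corollary 3.1: the bounds (2.5) transported to the physical traveling wave
`ĥ(ξ) = (θ³/v)·φ(vξ/θ²)` on `[0,w]`, `w = θ²/(2v)`. -/
theorem physical_traveling_wave_bounds (θ v : ℝ) (hθ : 0 < θ) (hv : 0 < v)
    (w : ℝ) (hw : w = θ^2 / (2*v))
    (φ : ℝ → ℝ) (hφ : IsTWProfile φ)
    (hhat : ℝ → ℝ) (hdef : ∀ ξ, hhat ξ = θ^3 / v * φ (v * ξ / θ^2)) :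
    ∀ ξ ∈ Set.Icc (0:ℝ) w,
      (4 * Real.sqrt 2 / 3) * (v ^ ((3:ℝ)/2) / θ^2) * ξ * (w - ξ) ^ ((3:ℝ)/2) ≤ hhat ξ ∧
      hhat ξ ≤ (4 * Real.sqrt 6 / 3) * (v ^ ((3:ℝ)/2) / θ^2) * ξ * (w - ξ) ^ ((3:ℝ)/2) := by
  intro ξ hξ
  subst hw
  have hx := mul_div_sq_mem_Icc hθ hv hξ
  have hscale := profileShape_rescale hθ hv hξ.2
  rw [hdef]
  constructor
  · calc _ = θ ^ 3 / v * (4 * √2 / 3 * profileShape (v * ξ / θ ^ 2)) := by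
          linear_combination (-(4 * √2 / 3)) * hscale
      _ ≤ θ ^ 3 / v * φ (v * ξ / θ ^ 2) := by
        gcongr
        refine hφ.mul_profileShape_le (by positivity) ?_ hx
        rw [div_pow, mul_pow, Real.sq_sqrt (by norm_num)]
        norm_num
  · calc θ ^ 3 / v * φ (v * ξ / θ ^ 2)
        ≤ θ ^ 3 / v * (4 * √6 / 3 * profileShape (v * ξ / θ ^ 2)) := by
          gcongr
          refine hφ.le_mul_profileShape (by positivity) ?_ hx
          rw [div_pow, mul_pow, Real.sq_sqrt (by norm_num)]
          norm_num
      _ = _ := by linear_combination (4 * √6 / 3) * hscale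
end

section
/- Let d > 0 and let φ : [0,d] → ℝ be continuous on [0,d], twice continuously differentiable on (0,d), with φ(η) > 0 for all η ∈ (0,d), φ(0) = φ(d) = 0, and φ(η)·φ''(η) = (1/2)·(φ'(η))² + η − d for all η ∈ (0,d). If A₁ > 0 satisfies A₁²·d² ≤ 8/9, then A₁·η·(d − η)^{3/2} ≤ φ(η) for all η ∈ [0,d]. -/
/-!
Writing `φ = ψ²`, the equation `φ φ'' = φ'² / 2 + η - d` becomes `ψ'' = (η - d) / (2 ψ³)`, whose
right-hand side is increasing in `ψ > 0`. For `A₁²d² < 5/3` the profile `φ_min` is a strict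
subsolution, `φ_min φ_min'' - φ_min'² / 2 > η - d`, so `√φ_min'' > (η - d) / (2 φ_min^{3/2})`.
At a positive interior maximum of `√φ_min - √φ` this would give `√φ_min'' > √φ''`, contradicting
the second-order condition for a maximum; as the difference vanishes at `0` and `d`, `√φ_min ≤ √φ`.
-/

open Set Topology

theorem IsLocalMax.deriv_deriv_nonpos {f : ℝ → ℝ} {x₀ : ℝ} (h : IsLocalMax f x₀)
    (hf : ∀ᶠ x in 𝓝 x₀, DifferentiableAt ℝ f x) : deriv (deriv f) x₀ ≤ 0 := by
  by_contra! hpos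
  have hright : ∀ᶠ x in 𝓝[>] x₀, 0 < deriv f x :=
    deriv_pos_right_of_sign_deriv <| nhdsWithin_le_nhds <|
      eventually_nhdsWithin_sign_eq_of_deriv_pos hpos h.deriv_eq_zero
  obtain ⟨u, hu, hsub⟩ := mem_nhdsGT_iff_exists_Ioo_subset.mp
    (hright.and (nhdsWithin_le_nhds (hf.and h)))
  have hy : (x₀ + u) / 2 ∈ Ioo x₀ u := ⟨by linarith [mem_Ioi.mp hu], by linarith [mem_Ioi.mp hu]⟩
  have hmono : StrictMonoOn f (Icc x₀ ((x₀ + u) / 2)) := by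
    refine strictMonoOn_of_deriv_pos (convex_Icc _ _) (fun x hx => ?_) fun x hx => ?_
    · rcases hx.1.eq_or_lt with rfl | hx₀
      · exact hf.self_of_nhds.continuousAt.continuousWithinAt
      · exact (hsub ⟨hx₀, hx.2.trans_lt hy.2⟩).2.1.continuousAt.continuousWithinAt
    · rw [interior_Icc] at hx
      exact (hsub ⟨hx.1, hx.2.trans hy.2⟩).1
  exact (hsub hy).2.2.not_gt <|
    hmono (left_mem_Icc.mpr hy.1.le) (right_mem_Icc.mpr hy.1.le) hy.1

theorem le_on_Icc_of_deriv_deriv_lt {u v : ℝ → ℝ} {a b : ℝ}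
    (hu : ContinuousOn u (Icc a b)) (hv : ContinuousOn v (Icc a b))
    (hu₂ : ContDiffOn ℝ 2 u (Ioo a b)) (hv₂ : ContDiffOn ℝ 2 v (Ioo a b))
    (ha : u a ≤ v a) (hb : u b ≤ v b)
    (huv : ∀ x ∈ Ioo a b, v x < u x → deriv (deriv v) x < deriv (deriv u) x) :
    ∀ x ∈ Icc a b, u x ≤ v x := by
  intro x hx
  obtain ⟨c, hc, hmax⟩ := isCompact_Icc.exists_isMaxOn ⟨x, hx⟩ (hu.sub hv)
  suffices u c ≤ v c by linarith [show u x - v x ≤ u c - v c from hmax hx]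
  by_contra! hvu
  have hc' : c ∈ Ioo a b :=
    ⟨hc.1.lt_of_ne (by rintro rfl; linarith), hc.2.lt_of_ne (by rintro rfl; linarith)⟩
  have hdiff {f : ℝ → ℝ} (hf : ContDiffOn ℝ 2 f (Ioo a b)) :
      DifferentiableOn ℝ f (Ioo a b) := hf.differentiableOn two_ne_zero
  have hdiff' {f : ℝ → ℝ} (hf : ContDiffOn ℝ 2 f (Ioo a b)) :
      DifferentiableAt ℝ (deriv f) c :=
    ((hf.deriv_of_isOpen isOpen_Ioo (by norm_num : (1 : WithTop ℕ∞) + 1 ≤ 2)).differentiableOn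
      one_ne_zero c hc').differentiableAt (isOpen_Ioo.mem_nhds hc')
  have hderiv : deriv (fun y => u y - v y) =ᶠ[𝓝 c] deriv u - deriv v := by
    filter_upwards [isOpen_Ioo.mem_nhds hc'] with y hy
    exact deriv_sub ((hdiff hu₂ y hy).differentiableAt (isOpen_Ioo.mem_nhds hy))
      ((hdiff hv₂ y hy).differentiableAt (isOpen_Ioo.mem_nhds hy))
  have hlocal : IsLocalMax (fun y => u y - v y) c := hmax.isLocalMax (Icc_mem_nhds hc'.1 hc'.2)
  have := hlocal.deriv_deriv_nonpos <| by
    filter_upwards [isOpen_Ioo.mem_nhds hc'] with y hy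
    exact ((hdiff (hu₂.sub hv₂)) y hy).differentiableAt (isOpen_Ioo.mem_nhds hy)
  rw [hderiv.deriv_eq, deriv_sub (hdiff' hu₂) (hdiff' hv₂)] at this
  linarith [huv c hc' hvu]

theorem deriv_deriv_sqrt {f : ℝ → ℝ} {s : Set ℝ} {x : ℝ} (hs : IsOpen s)
    (hf : ContDiffOn ℝ 2 f s) (hpos : ∀ y ∈ s, 0 < f y) (hx : x ∈ s) :
    deriv (deriv fun y => √(f y)) x =
      (f x * deriv (deriv f) x - deriv f x ^ 2 / 2) / (2 * f x * √(f x)) := by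
  have hf' (y) (hy : y ∈ s) : HasDerivAt f (deriv f y) y :=
    ((hf.differentiableOn two_ne_zero y hy).differentiableAt (hs.mem_nhds hy)).hasDerivAt
  have hf'' : HasDerivAt (deriv f) (deriv (deriv f) x) x :=
    (((hf.deriv_of_isOpen hs (by norm_num : (1 : WithTop ℕ∞) + 1 ≤ 2)).differentiableOn
      one_ne_zero x hx).differentiableAt (hs.mem_nhds hx)).hasDerivAt
  have hderiv : deriv (fun y => √(f y)) =ᶠ[𝓝 x] fun y => deriv f y / (2 * √(f y)) := by
    filter_upwards [hs.mem_nhds hx] with y hy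
    exact ((hf' y hy).sqrt (hpos y hy).ne').deriv
  have hsqrt : HasDerivAt (fun y => 2 * √(f y)) (2 * (deriv f x / (2 * √(f x)))) x :=
    ((hf' x hx).sqrt (hpos x hx).ne').const_mul 2
  have hfx : f x ≠ 0 := (hpos x hx).ne'
  have hx₀ : 0 < √(f x) := Real.sqrt_pos.mpr (hpos x hx)
  rw [hderiv.deriv_eq, (hf''.fun_div hsqrt (by positivity)).deriv]
  field_simp
  rw [Real.sq_sqrt (hpos x hx).le]
  ring

noncomputable def phiMin (A d η : ℝ) : ℝ := A * η * (d - η) ^ ((3:ℝ) / 2)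

theorem continuous_phiMin (A d : ℝ) : Continuous (phiMin A d) := by
  unfold phiMin
  fun_prop (disch := norm_num)

theorem contDiffOn_phiMin (A d : ℝ) : ContDiffOn ℝ 2 (phiMin A d) (Iio d) := by
  intro x hx
  unfold phiMin
  exact ContDiffAt.contDiffWithinAt (by fun_prop (disch := simp_all [ne_of_gt]))

theorem hasDerivAt_const_sub_rpow {d x : ℝ} (p : ℝ) (hx : x < d) :
    HasDerivAt (fun y => (d - y) ^ p) (-(p * (d - x) ^ (p - 1))) x := by
  simpa using ((hasDerivAt_id x).const_sub d).rpow_const (p := p) (Or.inl (sub_pos.mpr hx).ne')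

theorem hasDerivAt_phiMin (A : ℝ) {d x : ℝ} (hx : x < d) :
    HasDerivAt (phiMin A d)
      (A * (d - x) ^ ((3:ℝ) / 2) - 3 / 2 * A * x * (d - x) ^ ((1:ℝ) / 2)) x := by
  refine (((hasDerivAt_id x).const_mul A).fun_mul
    (hasDerivAt_const_sub_rpow ((3:ℝ) / 2) hx)).congr_deriv ?_
  norm_num
  ring

theorem hasDerivAt_deriv_phiMin (A : ℝ) {d x : ℝ} (hx : x < d) :
    HasDerivAt (deriv (phiMin A d))
      (3 / 4 * A * x * (d - x) ^ (-(1:ℝ) / 2) - 3 * A * (d - x) ^ ((1:ℝ) / 2)) x := by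
  have hderiv : deriv (phiMin A d) =ᶠ[𝓝 x]
      fun y => A * (d - y) ^ ((3:ℝ) / 2) - 3 / 2 * A * y * (d - y) ^ ((1:ℝ) / 2) := by
    filter_upwards [Iio_mem_nhds hx] with y hy
    exact (hasDerivAt_phiMin A hy).deriv
  refine HasDerivAt.congr_of_eventuallyEq ?_ hderiv
  refine (((hasDerivAt_const_sub_rpow ((3:ℝ) / 2) hx).const_mul A).fun_sub
    (((hasDerivAt_id x).const_mul (3 / 2 * A)).fun_mul
      (hasDerivAt_const_sub_rpow ((1:ℝ) / 2) hx))).congr_deriv ?_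
  norm_num
  ring

/- With `s = d - x`, the right-hand side equals `-A²s(s² + 3xs + 3x²/4)/2`, and
`s² + 3xs + 3x²/4 ≤ 6d²/5` with equality at `x = 2d/5`. -/
theorem sub_lt_phiMin_mul_deriv_deriv_sub {A d x : ℝ} (hx : x < d) (hA : A ^ 2 * d ^ 2 < 5 / 3) :
    x - d < phiMin A d x * deriv (deriv (phiMin A d)) x - deriv (phiMin A d) x ^ 2 / 2 := by
  have hs : 0 < d - x := sub_pos.mpr hx
  have h32 : (d - x) ^ ((3:ℝ) / 2) = (d - x) * √(d - x) := by
    rw [Real.sqrt_eq_rpow, ← Real.rpow_one_add' hs.le (by norm_num)]; norm_num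
  have h12 : (d - x) ^ (-(1:ℝ) / 2) = √(d - x) / (d - x) := by
    rw [Real.sqrt_eq_rpow, ← Real.rpow_sub_one hs.ne']; norm_num
  have hbound : A ^ 2 * ((d - x) ^ 2 + 3 * x * (d - x) + 3 / 4 * x ^ 2) < 2 := by
    nlinarith [sq_nonneg (A * (5 * x - 2 * d)), sq_nonneg A]
  rw [(hasDerivAt_deriv_phiMin A hx).deriv, (hasDerivAt_phiMin A hx).deriv, phiMin, h32, h12,
    ← Real.sqrt_eq_rpow]
  calc x - d < -(A ^ 2 * (d - x) * ((d - x) ^ 2 + 3 * x * (d - x) + 3 / 4 * x ^ 2)) / 2 := by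
        nlinarith [mul_pos hs (sub_pos.mpr hbound)]
    _ = _ := by
        field_simp
        rw [Real.sq_sqrt hs.le]
        ring

theorem lower_bound_for_first_integral_solution_general (d : ℝ) (φ : ℝ → ℝ)
    (hcont : ContinuousOn φ (Set.Icc 0 d))
    (hC2 : ContDiffOn ℝ 2 φ (Set.Ioo 0 d))
    (hpos : ∀ η ∈ Set.Ioo (0:ℝ) d, 0 < φ η)
    (h0 : φ 0 = 0) (hdd : φ d = 0)
    (heq : ∀ η ∈ Set.Ioo (0:ℝ) d,
      φ η * deriv (deriv φ) η = (1/2) * (deriv φ η)^2 + η - d)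
    (A₁ : ℝ) (hA : 0 < A₁) (hcond : A₁^2 * d^2 ≤ 8/9) :
    ∀ η ∈ Set.Icc (0:ℝ) d, A₁ * η * (d - η) ^ ((3:ℝ)/2) ≤ φ η := by
  have hmin_pos (η : ℝ) (hη : η ∈ Ioo 0 d) : 0 < phiMin A₁ d η :=
    mul_pos (mul_pos hA hη.1) (Real.rpow_pos_of_pos (sub_pos.mpr hη.2) _)
  have hmin : ContDiffOn ℝ 2 (phiMin A₁ d) (Ioo 0 d) :=
    (contDiffOn_phiMin A₁ d).mono Ioo_subset_Iio_self
  have hsqrt : ∀ η ∈ Icc 0 d, √(phiMin A₁ d η) ≤ √(φ η) := by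
    refine le_on_Icc_of_deriv_deriv_lt (continuous_phiMin A₁ d).sqrt.continuousOn hcont.sqrt
      (hmin.sqrt fun η hη => (hmin_pos η hη).ne') (hC2.sqrt fun η hη => (hpos η hη).ne')
      (by simp [phiMin, h0]) (by simp [phiMin, hdd]) fun η hη hlt => ?_
    have hlt' : φ η < phiMin A₁ d η := (Real.sqrt_lt_sqrt_iff (hpos η hη).le).mp hlt
    have hφ := hpos η hη
    have hm := hmin_pos η hη
    rw [deriv_deriv_sqrt isOpen_Ioo hC2 hpos hη, deriv_deriv_sqrt isOpen_Ioo hmin hmin_pos hη,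
      show φ η * deriv (deriv φ) η - deriv φ η ^ 2 / 2 = η - d by linarith [heq η hη]]
    calc (η - d) / (2 * φ η * √(φ η))
        < (η - d) / (2 * phiMin A₁ d η * √(phiMin A₁ d η)) := by
          rw [div_lt_div_iff₀ (by positivity) (by positivity)]
          have hden : 2 * φ η * √(φ η) < 2 * phiMin A₁ d η * √(phiMin A₁ d η) := by gcongr
          nlinarith [hη.2]
      _ < _ := div_lt_div_of_pos_right
          (sub_lt_phiMin_mul_deriv_deriv_sub hη.2 (by linarith)) (by positivity)
  intro η hη
  have hφ_nonneg : 0 ≤ φ η := by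
    rcases hη.1.eq_or_lt with rfl | h
    · exact h0.ge
    rcases hη.2.eq_or_lt with rfl | h'
    · exact hdd.ge
    exact (hpos η ⟨h, h'⟩).le
  exact (Real.sqrt_le_sqrt_iff hφ_nonneg).mp (hsqrt η hη)

/-- Lemma 2.2: `φ_min(η) = A₁·η·(d − η)^{3/2}` with `A₁²d² ≤ 8/9` is a lower bound for any
positive solution of `φφ'' = (1/2)(φ')² + η − d` with zero boundary values. -/
theorem lower_bound_for_first_integral_solution (d : ℝ) (hd : 0 < d) (φ : ℝ → ℝ)
    (hcont : ContinuousOn φ (Set.Icc 0 d))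
    (hC2 : ContDiffOn ℝ 2 φ (Set.Ioo 0 d))
    (hpos : ∀ η ∈ Set.Ioo (0:ℝ) d, 0 < φ η)
    (h0 : φ 0 = 0) (hdd : φ d = 0)
    (heq : ∀ η ∈ Set.Ioo (0:ℝ) d,
      φ η * deriv (deriv φ) η = (1/2) * (deriv φ η)^2 + η - d)
    (A₁ : ℝ) (hA : 0 < A₁) (hcond : A₁^2 * d^2 ≤ 8/9) :
    ∀ η ∈ Set.Icc (0:ℝ) d, A₁ * η * (d - η) ^ ((3:ℝ)/2) ≤ φ η :=
  lower_bound_for_first_integral_solution_general d φ hcont hC2 hpos h0 hdd heq A₁ hA hcond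
end
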